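/- arXiv:1104.1476 — 3 statements merged into one kernel-verified Lean document; each statement's English description precedes it below -/
import Mathlib

section
/- Lemma 6.1(b) (removing a white bead from a necklace). Let l be a necklace with n white beads, let v be a white position of l, and let l' = l.eraseIdx v be the necklace obtained by removing the bead at position v. Then for every k ≥ 1: card (P_k(l)) − 2n < card (P_k(l')) ≤ card (P_k(l)) (equivalently, card (P_k(l)) < card (P_k(l')) + 2n), and consequently for every J ≥ 1: μ_J(l) − 2·J·n < μ_J(l') ≤ μ_J(l). -/
/-!
The positions of `l.eraseIdx v` embed into those of `l` by an order embedding (`Fin.succAbove`)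
that misses only `v`. The arc condition `InArc i j p` is the strict cyclic betweenness `sbtw i p j`
of `Fin`, which order embeddings preserve; and since `v` is white, erasing it changes no black
count on an arc. So `P_k(l')` is in bijection with the pairs of `P_k(l)` avoiding `v`, while the
pairs of `P_k(l)` through `v` pair it with one of the other `n - 1` white beads, in either order.
-/

namespace Necklace

/-- The cyclic relative position of `p` with respect to `i` on a necklace of length `n`. -/
def cyclicRel (n : ℕ) (i p : Fin n) : ℕ := ((p : ℕ) + n - (i : ℕ)) % n

/-- `InArc i j p` means that the position `p` lies on the clockwise arc from `i` to `j`
(excluding the endpoints `i` and `j`). -/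
def InArc {n : ℕ} (i j p : Fin n) : Prop :=
  0 < cyclicRel n i p ∧ cyclicRel n i p < cyclicRel n i j

instance {n : ℕ} (i j p : Fin n) : Decidable (InArc i j p) :=
  inferInstanceAs (Decidable (0 < cyclicRel n i p ∧ cyclicRel n i p < cyclicRel n i j))

/-- An entry `false` of a necklace is a white bead, an entry `true` is a black bead. -/
def IsWhite (l : List Bool) (p : Fin l.length) : Prop := l.get p = false

def IsBlack (l : List Bool) (p : Fin l.length) : Prop := l.get p = true

instance (l : List Bool) (p : Fin l.length) : Decidable (IsWhite l p) :=
  inferInstanceAs (Decidable (l.get p = false))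

instance (l : List Bool) (p : Fin l.length) : Decidable (IsBlack l p) :=
  inferInstanceAs (Decidable (l.get p = true))

/-- The number of black beads on the clockwise arc from `i` to `j`. -/
def blackArc (l : List Bool) (i j : Fin l.length) : ℕ :=
  (Finset.univ.filter fun p : Fin l.length => InArc i j p ∧ IsBlack l p).card

/-- The number of white beads on the clockwise arc from `i` to `j`. -/
def whiteArc (l : List Bool) (i j : Fin l.length) : ℕ :=
  (Finset.univ.filter fun p : Fin l.length => InArc i j p ∧ IsWhite l p).card

/-- `P l k` is the set of ordered pairs `(i, j)` of distinct white beads of the necklace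
`l` whose clockwise arc from `i` to `j` contains at least `k` black beads. -/
def P (l : List Bool) (k : ℕ) : Finset (Fin l.length × Fin l.length) :=
  Finset.univ.filter fun q : Fin l.length × Fin l.length =>
    q.1 ≠ q.2 ∧ IsWhite l q.1 ∧ IsWhite l q.2 ∧ k ≤ blackArc l q.1 q.2

/-- The `J`-mixture `μ_J(l)` of the necklace `l`. -/
def mixture (J : ℕ) (l : List Bool) : ℕ := ∑ k ∈ Finset.Icc 1 J, (P l k).card

/-- The number of white beads of `l`. -/
def whiteCount (l : List Bool) : ℕ := l.count false

end Necklace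

namespace List

variable {α : Type*} (l : List α) (v : Fin l.length)

def eraseIdxEmb (p : Fin (l.eraseIdx v).length) : Fin l.length :=
  Fin.cast (length_eraseIdx_add_one v.isLt)
    ((Fin.cast (length_eraseIdx_add_one v.isLt).symm v).succAbove p)

theorem strictMono_eraseIdxEmb : StrictMono (l.eraseIdxEmb v) :=
  (Fin.cast_strictMono _).comp (Fin.strictMono_succAbove _)

theorem eraseIdxEmb_ne (p : Fin (l.eraseIdx v).length) : l.eraseIdxEmb v p ≠ v := fun h =>
  Fin.succAbove_ne _ p (Fin.ext (congrArg Fin.val h :))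

theorem exists_eraseIdxEmb_eq {q : Fin l.length} (hq : q ≠ v) : ∃ p, l.eraseIdxEmb v p = q := by
  have h := length_eraseIdx_add_one v.isLt
  obtain ⟨p, hp⟩ := Fin.exists_succAbove_eq (x := Fin.cast h.symm q) (y := Fin.cast h.symm v)
    (fun hc => hq (Fin.ext (congrArg Fin.val hc :)))
  exact ⟨p, Fin.ext (congrArg Fin.val hp :)⟩

theorem get_eraseIdxEmb (p : Fin (l.eraseIdx v).length) :
    l.get (l.eraseIdxEmb v p) = (l.eraseIdx v).get p := by
  simp only [get_eq_getElem, getElem_eraseIdx, eraseIdxEmb, Fin.succAbove, Fin.lt_def,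
    Fin.val_castSucc, Fin.val_cast]
  split_ifs <;> simp

end List

namespace Necklace

open Finset

theorem cyclicRel_eq {n : ℕ} (i p : Fin n) :
    cyclicRel n i p = if (i : ℕ) ≤ p then (p : ℕ) - i else n + (p : ℕ) - i := by
  unfold cyclicRel
  split_ifs with h
  · rw [show (p : ℕ) + n - i = (p - i) + n by omega, Nat.add_mod_right, Nat.mod_eq_of_lt (by omega)]
  · rw [Nat.mod_eq_of_lt (by omega)]
    omega

theorem inArc_iff_sbtw {n : ℕ} (i j p : Fin n) : InArc i j p ↔ sbtw i p j := by
  rw [InArc, cyclicRel_eq, cyclicRel_eq, Fin.sbtw_iff]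
  simp only [Fin.lt_def]
  split_ifs <;> omega

theorem inArc_map_iff {m n : ℕ} {f : Fin m → Fin n} (hf : StrictMono f) (i j p : Fin m) :
    InArc (f i) (f j) (f p) ↔ InArc i j p := by
  simp only [inArc_iff_sbtw, Fin.sbtw_iff, hf.lt_iff_lt]

theorem card_filter_isWhite (l : List Bool) :
    #{p | IsWhite l p} = whiteCount l :=
  Fin.card_filter_univ_eq_vector_get_eq_count false ⟨l, rfl⟩

section EraseWhite

variable {l : List Bool} {v : Fin l.length}

local notation "e" => l.eraseIdxEmb v

theorem blackArc_eraseIdx (hv : IsWhite l v) (i j : Fin (l.eraseIdx v).length) :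
    blackArc (l.eraseIdx v) i j = blackArc l (e i) (e j) := by
  have he := l.strictMono_eraseIdxEmb v
  unfold blackArc
  apply card_bij (fun p _ => e p)
  · intro p hp
    simp only [mem_filter, mem_univ, true_and] at hp ⊢
    rwa [IsBlack, List.get_eraseIdxEmb, inArc_map_iff he]
  · exact fun p _ q _ h => he.injective h
  · intro q hq
    simp only [mem_filter, mem_univ, true_and] at hq
    have hqv : q ≠ v := by
      rintro rfl
      exact Bool.false_ne_true (hv.symm.trans hq.2)
    obtain ⟨p, rfl⟩ := l.exists_eraseIdxEmb_eq v hqv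
    refine ⟨p, ?_, rfl⟩
    simp only [mem_filter, mem_univ, true_and]
    rwa [IsBlack, ← List.get_eraseIdxEmb, ← inArc_map_iff he]

theorem card_P_eraseIdx (hv : IsWhite l v) (k : ℕ) :
    #(P (l.eraseIdx v) k) = #{q ∈ P l k | q.1 ≠ v ∧ q.2 ≠ v} := by
  have he := (l.strictMono_eraseIdxEmb v).injective
  unfold P
  rw [filter_filter]
  apply card_bij (fun q _ => (e q.1, e q.2))
  · intro q hq
    simp only [mem_filter, mem_univ, true_and] at hq ⊢
    refine ⟨?_, l.eraseIdxEmb_ne v _, l.eraseIdxEmb_ne v _⟩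
    simpa only [IsWhite, List.get_eraseIdxEmb, blackArc_eraseIdx hv, he.ne_iff] using hq
  · exact fun q _ q' _ h => Prod.ext (he (congrArg Prod.fst h)) (he (congrArg Prod.snd h))
  · rintro ⟨q₁, q₂⟩ hq
    simp only [mem_filter, mem_univ, true_and] at hq
    obtain ⟨hP, hq₁, hq₂⟩ := hq
    obtain ⟨p₁, rfl⟩ := l.exists_eraseIdxEmb_eq v hq₁
    obtain ⟨p₂, rfl⟩ := l.exists_eraseIdxEmb_eq v hq₂
    refine ⟨(p₁, p₂), ?_, rfl⟩
    simp only [mem_filter, mem_univ, true_and]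
    simpa only [IsWhite, List.get_eraseIdxEmb, blackArc_eraseIdx hv, he.ne_iff] using hP

theorem card_P_through_lt (hv : IsWhite l v) (k : ℕ) :
    #{q ∈ P l k | ¬(q.1 ≠ v ∧ q.2 ≠ v)} < 2 * whiteCount l := by
  set W := ({p | IsWhite l p} : Finset _).erase v
  have hW : #W < whiteCount l := by
    rw [← card_filter_isWhite]
    exact card_erase_lt_of_mem (by simpa using hv)
  have hsub : {q ∈ P l k | ¬(q.1 ≠ v ∧ q.2 ≠ v)} ⊆ W.image (v, ·) ∪ W.image (·, v) := by
    rintro ⟨q₁, q₂⟩ hq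
    rw [mem_filter, P, mem_filter] at hq
    simp only [mem_univ, true_and, not_and_or, not_not] at hq
    obtain ⟨⟨hne, hw₁, hw₂, -⟩, rfl | rfl⟩ := hq
    · exact mem_union_left _ (mem_image_of_mem _ (by simp [W, hw₂, Ne.symm hne]))
    · exact mem_union_right _ (mem_image_of_mem _ (by simp [W, hw₁, hne]))
  calc #{q ∈ P l k | ¬(q.1 ≠ v ∧ q.2 ≠ v)}
      ≤ #(W.image (v, ·)) + #(W.image (·, v)) := (card_le_card hsub).trans (card_union_le _ _)
    _ ≤ #W + #W := add_le_add card_image_le card_image_le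
    _ < 2 * whiteCount l := by omega

theorem card_P_eraseIdx_le (hv : IsWhite l v) (k : ℕ) : #(P (l.eraseIdx v) k) ≤ #(P l k) :=
  card_P_eraseIdx hv k ▸ card_filter_le _ _

theorem card_P_lt_card_P_eraseIdx_add (hv : IsWhite l v) (k : ℕ) :
    #(P l k) < #(P (l.eraseIdx v) k) + 2 * whiteCount l := by
  rw [card_P_eraseIdx hv, ← card_filter_add_card_filter_not (s := P l k) (fun q => q.1 ≠ v ∧ q.2 ≠ v)]
  exact Nat.add_lt_add_left (card_P_through_lt hv k) _

theorem mixture_eraseIdx_le (hv : IsWhite l v) (J : ℕ) : mixture J (l.eraseIdx v) ≤ mixture J l :=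
  sum_le_sum fun k _ => card_P_eraseIdx_le hv k

theorem mixture_lt_mixture_eraseIdx_add (hv : IsWhite l v) {J : ℕ} (hJ : 1 ≤ J) :
    mixture J l < mixture J (l.eraseIdx v) + 2 * J * whiteCount l := by
  calc mixture J l < ∑ k ∈ Icc 1 J, (#(P (l.eraseIdx v) k) + 2 * whiteCount l) :=
        sum_lt_sum_of_nonempty (nonempty_Icc.2 hJ) fun k _ => card_P_lt_card_P_eraseIdx_add hv k
    _ = mixture J (l.eraseIdx v) + 2 * J * whiteCount l := by
        rw [sum_add_distrib, sum_const, Nat.card_Icc, Nat.add_sub_cancel, smul_eq_mul, mixture,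
          mul_left_comm, mul_assoc]

end EraseWhite

theorem mixture_erase_white_general (l : List Bool) (v : Fin l.length)
    (hv : IsWhite l v) (n : ℕ) (hn : n = whiteCount l) :
    (∀ k : ℕ, 1 ≤ k →
      (P (l.eraseIdx (v : ℕ)) k).card ≤ (P l k).card ∧
      (P l k).card < (P (l.eraseIdx (v : ℕ)) k).card + 2 * n) ∧
    (∀ J : ℕ, 1 ≤ J →
      mixture J (l.eraseIdx (v : ℕ)) ≤ mixture J l ∧
      mixture J l < mixture J (l.eraseIdx (v : ℕ)) + 2 * J * n) := by
  subst hn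
  exact ⟨fun k _ => ⟨card_P_eraseIdx_le hv k, card_P_lt_card_P_eraseIdx_add hv k⟩,
    fun J hJ => ⟨mixture_eraseIdx_le hv J, mixture_lt_mixture_eraseIdx_add hv hJ⟩⟩

/-- Lemma 6.1(b): removing a white bead `v` from a necklace `l` with `n` white beads
decreases each `card (P_k)` by less than `2n`, and hence decreases `μ_J` by less than
`2·J·n`. -/
theorem mixture_erase_white (l : List Bool) (hl : l ≠ []) (v : Fin l.length)
    (hv : IsWhite l v) (n : ℕ) (hn : n = whiteCount l) :
    (∀ k : ℕ, 1 ≤ k →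
      (P (l.eraseIdx (v : ℕ)) k).card ≤ (P l k).card ∧
      (P l k).card < (P (l.eraseIdx (v : ℕ)) k).card + 2 * n) ∧
    (∀ J : ℕ, 1 ≤ J →
      mixture J (l.eraseIdx (v : ℕ)) ≤ mixture J l ∧
      mixture J l < mixture J (l.eraseIdx (v : ℕ)) + 2 * J * n) :=
  mixture_erase_white_general l v hv n hn

end Necklace
end

section
/- Lemma 6.2(d) (removing a middle black bead from a string). Let J ≥ 1 and let l be a string of beads with three black positions v₁ < v₂ < v₃ such that the open interval of positions (v₁, v₃) contains at most J black positions, the open interval (v₁, v₂) contains exactly m₁ white positions, and the open interval (v₂, v₃) contains exactly m₂ white positions. If l' = l.eraseIdx v₂ is obtained from l by removing the bead at position v₂, then μ_J^c(l') ≤ μ_J^c(l) − m₁·m₂. -/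
namespace BeadString

/-- An entry `false` of a string of beads is a white bead, an entry `true` is a black
bead. -/
def IsWhite (l : List Bool) (p : Fin l.length) : Prop := l.get p = false

def IsBlack (l : List Bool) (p : Fin l.length) : Prop := l.get p = true

instance (l : List Bool) (p : Fin l.length) : Decidable (IsWhite l p) :=
  inferInstanceAs (Decidable (l.get p = false))

instance (l : List Bool) (p : Fin l.length) : Decidable (IsBlack l p) :=
  inferInstanceAs (Decidable (l.get p = true))

/-- The number of black beads strictly between the positions `i` and `j`. -/
def blackBetween (l : List Bool) (i j : Fin l.length) : ℕ :=
  (Finset.univ.filter fun p : Fin l.length => i < p ∧ p < j ∧ IsBlack l p).card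

/-- The number of white beads strictly between the positions `i` and `j`. -/
def whiteBetween (l : List Bool) (i j : Fin l.length) : ℕ :=
  (Finset.univ.filter fun p : Fin l.length => i < p ∧ p < j ∧ IsWhite l p).card

/-- `P l k` is the set of pairs `(i, j)` of white beads with `i < j` separated by at
least `k` black beads. -/
def P (l : List Bool) (k : ℕ) : Finset (Fin l.length × Fin l.length) :=
  Finset.univ.filter fun q : Fin l.length × Fin l.length =>
    q.1 < q.2 ∧ IsWhite l q.1 ∧ IsWhite l q.2 ∧ k ≤ blackBetween l q.1 q.2

/-- The `J`-mixture `μ_J^c(l)` of the string of beads `l`. -/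
def mixture (J : ℕ) (l : List Bool) : ℕ := ∑ k ∈ Finset.Icc 1 J, (P l k).card

/-- The number of white beads of `l`. -/
def whiteCount (l : List Bool) : ℕ := l.count false

/-! A white pair `(i, j)` lies in `P l k` for exactly `min J (blackBetween l i j)` values of
`k ∈ [1, J]`, so `μ_J^c(l)` is the sum of these minima over the white pairs. Removing the black
bead `v₂` lowers no term, and lowers by one the term of each of the `m₁ * m₂` pairs with one bead
in `(v₁, v₂)` and the other in `(v₂, v₃)`: such a pair is separated in `l` by at most
`blackBetween l v₁ v₃ ≤ J` black beads, so its minimum is not yet capped at `J`. -/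

open Finset

def whitePairs (l : List Bool) : Finset (Fin l.length × Fin l.length) :=
  univ.filter fun q => q.1 < q.2 ∧ IsWhite l q.1 ∧ IsWhite l q.2

lemma card_filter_Icc_one_le (J b : ℕ) : #{k ∈ Icc 1 J | k ≤ b} = min J b := by
  have h : {k ∈ Icc 1 J | k ≤ b} = Icc 1 (min J b) := by
    ext k
    simp only [mem_filter, mem_Icc]
    omega
  rw [h, Nat.card_Icc]
  omega

lemma mixture_eq_sum_min (J : ℕ) (l : List Bool) :
    mixture J l = ∑ q ∈ whitePairs l, min J (blackBetween l q.1 q.2) := by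
  have hP : ∀ k, P l k = {q ∈ whitePairs l | k ≤ blackBetween l q.1 q.2} := by
    intro k
    simp only [whitePairs, P, filter_filter, and_assoc]
  calc mixture J l
      = ∑ k ∈ Icc 1 J, ∑ q ∈ whitePairs l, if k ≤ blackBetween l q.1 q.2 then 1 else 0 := by
        simp only [mixture, hP, card_filter]
    _ = ∑ q ∈ whitePairs l, #{k ∈ Icc 1 J | k ≤ blackBetween l q.1 q.2} := by
        rw [sum_comm]
        simp only [card_filter]
    _ = ∑ q ∈ whitePairs l, min J (blackBetween l q.1 q.2) := by
        simp only [card_filter_Icc_one_le]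

lemma blackBetween_mono {l : List Bool} {a a' b b' : Fin l.length} (ha : a' ≤ a) (hb : b ≤ b') :
    blackBetween l a b ≤ blackBetween l a' b' :=
  card_le_card fun _ hp => by
    simp only [mem_filter, mem_univ, true_and] at hp ⊢
    exact ⟨ha.trans_lt hp.1, hp.2.1.trans_le hb, hp.2.2⟩

section eraseIdx

variable {l : List Bool} (v : Fin l.length)

def eraseIdxEmb : Fin (l.eraseIdx v).length ↪o Fin l.length :=
  OrderEmbedding.ofStrictMono
    (fun p => ⟨if (p : ℕ) < v then p else p + 1, by
      have := p.2
      have := List.length_eraseIdx_of_lt v.2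
      split <;> omega⟩)
    (fun p q hpq => by
      rw [Fin.lt_def] at hpq
      simp only [Fin.mk_lt_mk]
      split <;> split <;> omega)

lemma eraseIdxEmb_val (p : Fin (l.eraseIdx v).length) :
    (eraseIdxEmb v p : ℕ) = if (p : ℕ) < v then (p : ℕ) else p + 1 := rfl

lemma map_univ_eraseIdxEmb : univ.map (eraseIdxEmb v).toEmbedding = univ.erase v := by
  ext y
  simp only [mem_map, mem_univ, true_and, mem_erase, and_true, RelEmbedding.coe_toEmbedding]
  constructor
  · rintro ⟨p, rfl⟩ h
    have := congrArg Fin.val h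
    rw [eraseIdxEmb_val] at this
    split at this <;> omega
  · intro hy
    have hyv : (y : ℕ) ≠ v := fun h => hy (Fin.ext h)
    have := y.2
    have := List.length_eraseIdx_of_lt v.2
    by_cases hlt : (y : ℕ) < v
    · exact ⟨⟨y, by omega⟩, Fin.ext (by simp [eraseIdxEmb_val, hlt])⟩
    · refine ⟨⟨y - 1, by omega⟩, Fin.ext ?_⟩
      simp only [eraseIdxEmb_val]
      rw [if_neg (by omega)]
      omega

lemma get_eraseIdxEmb (p : Fin (l.eraseIdx v).length) :
    l.get (eraseIdxEmb v p) = (l.eraseIdx v).get p := by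
  simp only [List.get_eq_getElem, List.getElem_eraseIdx]
  split <;> congr 1 <;> simp [eraseIdxEmb_val, *]

lemma isWhite_eraseIdx_iff (p : Fin (l.eraseIdx v).length) :
    IsWhite (l.eraseIdx v) p ↔ IsWhite l (eraseIdxEmb v p) := by
  rw [IsWhite, IsWhite, get_eraseIdxEmb]

lemma isBlack_eraseIdx_iff (p : Fin (l.eraseIdx v).length) :
    IsBlack (l.eraseIdx v) p ↔ IsBlack l (eraseIdxEmb v p) := by
  rw [IsBlack, IsBlack, get_eraseIdxEmb]

lemma card_filter_eq_card_filter_eraseIdxEmb_add (Q : Fin l.length → Prop) [DecidablePred Q] :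
    #{y | Q y} = #{p | Q (eraseIdxEmb v p)} + if Q v then 1 else 0 := by
  rw [card_filter, card_filter, ← sum_erase_add _ _ (mem_univ v), ← map_univ_eraseIdxEmb,
    sum_map]
  rfl

lemma blackBetween_eraseIdxEmb (hv : IsBlack l v) (p q : Fin (l.eraseIdx v).length) :
    blackBetween l (eraseIdxEmb v p) (eraseIdxEmb v q) =
      blackBetween (l.eraseIdx v) p q +
        if eraseIdxEmb v p < v ∧ v < eraseIdxEmb v q then 1 else 0 := by
  simp only [blackBetween, card_filter_eq_card_filter_eraseIdxEmb_add v, OrderEmbedding.lt_iff_lt,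
    isBlack_eraseIdx_iff, hv, and_true]

lemma whiteBetween_eq_card_eraseIdxEmb (hv : IsBlack l v) (a b : Fin l.length) :
    whiteBetween l a b =
      #{p | a < eraseIdxEmb v p ∧ eraseIdxEmb v p < b ∧ IsWhite l (eraseIdxEmb v p)} := by
  have hvw : ¬IsWhite l v := by simp_all [IsWhite, IsBlack]
  simp only [whiteBetween, card_filter_eq_card_filter_eraseIdxEmb_add v, hvw, and_false,
    if_false, add_zero]

lemma sum_whitePairs_eraseIdx_le (f : Fin l.length × Fin l.length → ℕ) :
    ∑ q ∈ whitePairs (l.eraseIdx v), f (eraseIdxEmb v q.1, eraseIdxEmb v q.2) ≤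
      ∑ q ∈ whitePairs l, f q := by
  let e := (eraseIdxEmb v).toEmbedding
  calc ∑ q ∈ whitePairs (l.eraseIdx v), f (e q.1, e q.2)
      = ∑ q ∈ (whitePairs (l.eraseIdx v)).map (e.prodMap e), f q := by rw [sum_map]; rfl
    _ ≤ ∑ q ∈ whitePairs l, f q := ?_
  refine sum_le_sum_of_subset fun q hq => ?_
  obtain ⟨p, hp, rfl⟩ := mem_map.1 hq
  simp only [whitePairs, mem_filter, mem_univ, true_and, isWhite_eraseIdx_iff] at hp ⊢
  simpa [e, OrderEmbedding.lt_iff_lt] using hp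

lemma mixture_eraseIdx_add_card_le (J : ℕ) (hv : IsBlack l v)
    (D : Finset (Fin (l.eraseIdx v).length × Fin (l.eraseIdx v).length))
    (hDW : D ⊆ whitePairs (l.eraseIdx v))
    (hD : ∀ q ∈ D, eraseIdxEmb v q.1 < v ∧ v < eraseIdxEmb v q.2 ∧
      blackBetween l (eraseIdxEmb v q.1) (eraseIdxEmb v q.2) ≤ J) :
    mixture J (l.eraseIdx v) + #D ≤ mixture J l := by
  let e := eraseIdxEmb v
  calc mixture J (l.eraseIdx v) + #D
      = ∑ q ∈ whitePairs (l.eraseIdx v),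
          (min J (blackBetween (l.eraseIdx v) q.1 q.2) + if q ∈ D then 1 else 0) := by
        rw [mixture_eq_sum_min, sum_add_distrib, ← card_filter, filter_mem_eq_inter,
          inter_eq_right.2 hDW]
    _ ≤ ∑ q ∈ whitePairs (l.eraseIdx v), min J (blackBetween l (e q.1) (e q.2)) := by
        refine sum_le_sum fun q _ => ?_
        rw [blackBetween_eraseIdxEmb v hv]
        by_cases hq : q ∈ D
        · obtain ⟨h1, h2, hJ⟩ := hD q hq
          rw [blackBetween_eraseIdxEmb v hv, if_pos ⟨h1, h2⟩] at hJ
          rw [if_pos hq, if_pos ⟨h1, h2⟩]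
          omega
        · rw [if_neg hq]
          omega
    _ ≤ ∑ q ∈ whitePairs l, min J (blackBetween l q.1 q.2) :=
        sum_whitePairs_eraseIdx_le v fun q => min J (blackBetween l q.1 q.2)
    _ = mixture J l := (mixture_eq_sum_min J l).symm

end eraseIdx

theorem mixture_erase_middle_black_general (J : ℕ) (l : List Bool)
    (v₁ v₂ v₃ : Fin l.length)
    (hb₂ : IsBlack l v₂)
    (harc : blackBetween l v₁ v₃ ≤ J)
    (m₁ m₂ : ℕ) (hm₁ : m₁ = whiteBetween l v₁ v₂) (hm₂ : m₂ = whiteBetween l v₂ v₃) :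
    mixture J (l.eraseIdx (v₂ : ℕ)) + m₁ * m₂ ≤ mixture J l := by
  let e := eraseIdxEmb v₂
  let D := univ.filter (fun p => v₁ < e p ∧ e p < v₂ ∧ IsWhite l (e p)) ×ˢ
    univ.filter (fun p => v₂ < e p ∧ e p < v₃ ∧ IsWhite l (e p))
  have hcard : #D = m₁ * m₂ := by
    rw [card_product, hm₁, hm₂, whiteBetween_eq_card_eraseIdxEmb v₂ hb₂,
      whiteBetween_eq_card_eraseIdxEmb v₂ hb₂]
  have hDW : D ⊆ whitePairs (l.eraseIdx v₂) := fun q hq => by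
    simp only [D, mem_product, mem_filter, mem_univ, true_and] at hq
    simp only [whitePairs, mem_filter, mem_univ, true_and, isWhite_eraseIdx_iff]
    exact ⟨e.lt_iff_lt.1 (hq.1.2.1.trans hq.2.1), hq.1.2.2, hq.2.2.2⟩
  have hD : ∀ q ∈ D, e q.1 < v₂ ∧ v₂ < e q.2 ∧ blackBetween l (e q.1) (e q.2) ≤ J :=
    fun q hq => by
      simp only [D, mem_product, mem_filter, mem_univ, true_and] at hq
      exact ⟨hq.1.2.1, hq.2.1, (blackBetween_mono hq.1.1.le hq.2.2.1.le).trans harc⟩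
  simpa only [hcard] using mixture_eraseIdx_add_card_le v₂ J hb₂ D hDW hD

/-- Lemma 6.2(d): if `v₁ < v₂ < v₃` are black beads such that the open interval
`(v₁, v₃)` contains at most `J` black beads, and the open intervals `(v₁, v₂)` and
`(v₂, v₃)` contain `m₁` and `m₂` white beads respectively, then removing `v₂` decreases
`μ_J^c` by at least `m₁·m₂`. -/
theorem mixture_erase_middle_black (J : ℕ) (hJ : 1 ≤ J) (l : List Bool)
    (v₁ v₂ v₃ : Fin l.length) (h12 : v₁ < v₂) (h23 : v₂ < v₃)
    (hb₁ : IsBlack l v₁) (hb₂ : IsBlack l v₂) (hb₃ : IsBlack l v₃)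
    (harc : blackBetween l v₁ v₃ ≤ J)
    (m₁ m₂ : ℕ) (hm₁ : m₁ = whiteBetween l v₁ v₂) (hm₂ : m₂ = whiteBetween l v₂ v₃) :
    mixture J (l.eraseIdx (v₂ : ℕ)) + m₁ * m₂ ≤ mixture J l :=
  mixture_erase_middle_black_general J l v₁ v₂ v₃ hb₂ harc m₁ m₂ hm₁ hm₂

end BeadString
end

section
/- Lemma 6.2(e) (a balanced black bead on a string). Let l be a string of beads whose set of black beads is nonempty, and let μ₁ = card (P₁(l)) denote the 1-mixture of l (the number of pairs of white positions i < j separated by at least one black position). Then there exists a black position v of l such that, denoting by m₁ and m₂ the numbers of white positions before v and after v respectively, ordered so that m₁ ≥ m₂ (i.e. after swapping if necessary), one has m₁·m₂ ≤ μ₁ ≤ (2·m₁ − 1)·m₂. -/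
namespace BeadString

/-- The number of white beads at positions strictly before `v`. -/
def whitesBefore (l : List Bool) (v : Fin l.length) : ℕ :=
  (Finset.univ.filter fun p : Fin l.length => p < v ∧ IsWhite l p).card

/-- The number of white beads at positions strictly after `v`. -/
def whitesAfter (l : List Bool) (v : Fin l.length) : ℕ :=
  (Finset.univ.filter fun p : Fin l.length => v < p ∧ IsWhite l p).card

open Finset

lemma not_white_of_black {l : List Bool} {p : Fin l.length} (h : IsBlack l p) :
    ¬ IsWhite l p := by simp [IsBlack, IsWhite] at *; simp [h]

lemma one_le_blackBetween_iff {l : List Bool} (i j : Fin l.length) :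
    1 ≤ blackBetween l i j ↔ ∃ u, i < u ∧ u < j ∧ IsBlack l u := by
  rw [blackBetween, Nat.one_le_iff_ne_zero, Ne, card_eq_zero, ← ne_eq,
    ← Finset.nonempty_iff_ne_empty]
  constructor
  · rintro ⟨u, hu⟩; simp only [mem_filter, mem_univ, true_and] at hu; exact ⟨u, hu⟩
  · rintro ⟨u, hu⟩; exact ⟨u, by simp only [mem_filter, mem_univ, true_and]; exact hu⟩

lemma before_split {l : List Bool} {u v : Fin l.length} (hu : IsBlack l u) (huv : u < v) :
    whitesBefore l v = whitesBefore l u + whiteBetween l u v := by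
  rw [whitesBefore, whitesBefore, whiteBetween, ← Finset.card_union_of_disjoint]
  · congr 1
    ext p
    simp only [mem_union, mem_filter, mem_univ, true_and]
    constructor
    · rintro ⟨hpv, hw⟩
      rcases lt_trichotomy p u with h | h | h
      · exact Or.inl ⟨h, hw⟩
      · exact absurd hw (h ▸ not_white_of_black hu)
      · exact Or.inr ⟨h, hpv, hw⟩
    · rintro (⟨h, hw⟩ | ⟨_, h, hw⟩)
      · exact ⟨h.trans huv, hw⟩
      · exact ⟨h, hw⟩
  · rw [Finset.disjoint_left]
    rintro p hp hq
    simp only [mem_filter, mem_univ, true_and] at hp hq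
    exact absurd (hq.1.trans hp.1) (lt_irrefl u)

lemma after_split {l : List Bool} {u v : Fin l.length} (hv : IsBlack l v) (huv : u < v) :
    whitesAfter l u = whiteBetween l u v + whitesAfter l v := by
  rw [whitesAfter, whitesAfter, whiteBetween, ← Finset.card_union_of_disjoint]
  · congr 1
    ext p
    simp only [mem_union, mem_filter, mem_univ, true_and]
    constructor
    · rintro ⟨hup, hw⟩
      rcases lt_trichotomy p v with h | h | h
      · exact Or.inl ⟨hup, h, hw⟩
      · exact absurd hw (h ▸ not_white_of_black hv)
      · exact Or.inr ⟨h, hw⟩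
    · rintro (⟨h, _, hw⟩ | ⟨h, hw⟩)
      · exact ⟨h, hw⟩
      · exact ⟨huv.trans h, hw⟩
  · rw [Finset.disjoint_left]
    rintro p hp hq
    simp only [mem_filter, mem_univ, true_and] at hp hq
    exact absurd (hq.1.trans hp.2.1) (lt_irrefl v)

lemma before_add_after {l : List Bool} {v : Fin l.length} (hv : IsBlack l v) :
    whitesBefore l v + whitesAfter l v = (univ.filter (IsWhite l)).card := by
  rw [whitesBefore, whitesAfter, ← Finset.card_union_of_disjoint]
  · congr 1
    ext p
    simp only [mem_union, mem_filter, mem_univ, true_and]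
    constructor
    · rintro (⟨_, hw⟩ | ⟨_, hw⟩) <;> exact hw
    · intro hw
      rcases lt_trichotomy p v with h | h | h
      · exact Or.inl ⟨h, hw⟩
      · exact absurd hw (h ▸ not_white_of_black hv)
      · exact Or.inr ⟨h, hw⟩
  · rw [Finset.disjoint_left]
    rintro p hp hq
    simp only [mem_filter, mem_univ, true_and] at hp hq
    exact absurd (hp.1.trans hq.1) (lt_irrefl p)

lemma prod_le_card_P {l : List Bool} {v : Fin l.length} (hv : IsBlack l v) :
    whitesBefore l v * whitesAfter l v ≤ (P l 1).card := by
  rw [whitesBefore, whitesAfter, ← Finset.card_product]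
  apply Finset.card_le_card
  rintro ⟨i, j⟩ hij
  simp only [Finset.mem_product, mem_filter, mem_univ, true_and] at hij
  obtain ⟨⟨hiv, hwi⟩, hvj, hwj⟩ := hij
  simp only [P, mem_filter, mem_univ, true_and]
  exact ⟨hiv.trans hvj, hwi, hwj, (one_le_blackBetween_iff i j).mpr ⟨v, hiv, hvj, hv⟩⟩

lemma two_mul_pairs {m : ℕ} (s : Finset (Fin m)) :
    2 * ((s ×ˢ s).filter fun q : Fin m × Fin m => q.1 < q.2).card + s.card
      = s.card * s.card := by
  have hbij : ((s ×ˢ s).filter fun q : Fin m × Fin m => q.1 < q.2).card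
      = ((s ×ˢ s).filter fun q : Fin m × Fin m => q.2 < q.1).card := by
    apply Finset.card_bij (fun q _ => (q.2, q.1))
    · rintro ⟨a, b⟩ h
      simp only [mem_filter, Finset.mem_product] at h ⊢
      exact ⟨⟨h.1.2, h.1.1⟩, h.2⟩
    · rintro ⟨a, b⟩ _ ⟨c, d⟩ _ h
      simp only [Prod.mk.injEq] at h
      simp [h.1, h.2]
    · rintro ⟨a, b⟩ h
      simp only [mem_filter, Finset.mem_product] at h
      exact ⟨(b, a), by simp only [mem_filter, Finset.mem_product]; exact ⟨⟨h.1.2, h.1.1⟩, h.2⟩, rfl⟩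
  have hunion : ((s ×ˢ s).filter fun q : Fin m × Fin m => q.1 < q.2) ∪
      ((s ×ˢ s).filter fun q : Fin m × Fin m => q.2 < q.1) = s.offDiag := by
    ext ⟨a, b⟩
    simp only [mem_union, mem_filter, Finset.mem_product, Finset.mem_offDiag]
    constructor
    · rintro (⟨⟨h1, h2⟩, h⟩ | ⟨⟨h1, h2⟩, h⟩)
      · exact ⟨h1, h2, ne_of_lt h⟩
      · exact ⟨h1, h2, (ne_of_lt h).symm⟩
    · rintro ⟨h1, h2, h⟩
      rcases lt_or_gt_of_ne h with hh | hh
      · exact Or.inl ⟨⟨h1, h2⟩, hh⟩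
      · exact Or.inr ⟨⟨h1, h2⟩, hh⟩
  have hdisj : Disjoint ((s ×ˢ s).filter fun q : Fin m × Fin m => q.1 < q.2)
      ((s ×ˢ s).filter fun q : Fin m × Fin m => q.2 < q.1) := by
    rw [Finset.disjoint_left]
    rintro ⟨a, b⟩ h1 h2
    simp only [mem_filter] at h1 h2
    exact absurd (h1.2.trans h2.2) (lt_irrefl a)
  have hcard := Finset.card_union_of_disjoint hdisj
  rw [hunion] at hcard
  have hod : s.offDiag.card = s.card * s.card - s.card := Finset.offDiag_card s
  have hle : s.card ≤ s.card * s.card := by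
    rcases Nat.eq_zero_or_pos s.card with h | h
    · simp [h]
    · exact Nat.le_mul_of_pos_left _ h
  omega

/-- Counting bound: given a set `Bk` of white positions with no black bead between any
two of them, `2·μ₁ + w² + n ≤ n² + w`. -/
lemma P_pairs_bound (l : List Bool) (Bk : Finset (Fin l.length))
    (hBw : ∀ p ∈ Bk, IsWhite l p)
    (hBnb : ∀ q1 ∈ Bk, ∀ q2 ∈ Bk, q1 < q2 → blackBetween l q1 q2 = 0) :
    2 * (P l 1).card + Bk.card * Bk.card + (univ.filter (IsWhite l)).card
      ≤ (univ.filter (IsWhite l)).card * (univ.filter (IsWhite l)).card + Bk.card := by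
  classical
  set W := univ.filter (IsWhite l) with hW
  have h2a := two_mul_pairs W
  have h2b := two_mul_pairs Bk
  set Pall := (W ×ˢ W).filter (fun q : Fin l.length × Fin l.length => q.1 < q.2) with hPall
  set Bp := (Bk ×ˢ Bk).filter (fun q : Fin l.length × Fin l.length => q.1 < q.2) with hBp
  have hdisj : Disjoint (P l 1) Bp := by
    rw [Finset.disjoint_left]
    rintro ⟨i, j⟩ h1 h2
    simp only [P, mem_filter, mem_univ, true_and] at h1
    simp only [hBp, mem_filter, Finset.mem_product] at h2
    have := hBnb i h2.1.1 j h2.1.2 h2.2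
    omega
  have hsub : (P l 1) ∪ Bp ⊆ Pall := by
    intro q hq
    rcases Finset.mem_union.mp hq with h | h
    · simp only [P, mem_filter, mem_univ, true_and] at h
      simp only [hPall, mem_filter, Finset.mem_product, hW, mem_filter, mem_univ, true_and]
      exact ⟨⟨h.2.1, h.2.2.1⟩, h.1⟩
    · simp only [hBp, mem_filter, Finset.mem_product] at h
      simp only [hPall, mem_filter, Finset.mem_product, hW, mem_filter, mem_univ, true_and]
      exact ⟨⟨hBw _ h.1.1, hBw _ h.1.2⟩, h.2⟩
  have hcard : (P l 1).card + Bp.card ≤ Pall.card := by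
    rw [← Finset.card_union_of_disjoint hdisj]
    exact Finset.card_le_card hsub
  omega

/-- Arithmetic core. -/
lemma arith_key (μ w a b : ℕ)
    (h : 2 * μ + w * w + (a + b) ≤ (a + b) * (a + b) + w)
    (haw : a ≤ b + w) (hwa : w ≤ a) (hb : 1 ≤ b) (hba : b ≤ a) :
    μ ≤ (2 * a - 1) * b := by
  obtain ⟨d, hd⟩ := Nat.exists_eq_add_of_le hba
  subst hd
  obtain ⟨e, he⟩ : ∃ e, w = d + e := Nat.exists_eq_add_of_le (by omega)
  subst he
  have hgoal : μ + b ≤ 2 * (b + d) * b := by nlinarith [sq_nonneg e, Nat.le_refl e]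
  have h2 : (2 * (b + d) - 1) * b = 2 * (b + d) * b - b := by
    rw [Nat.sub_mul]; simp
  omega

/-- Existence of a big white block to the left of a suitably chosen black bead. -/
lemma left_block {l : List Bool} {v : Fin l.length} (hv : IsBlack l v)
    (hmax : ∀ u : Fin l.length, IsBlack l u →
      min (whitesBefore l u) (whitesAfter l u) ≤ whitesAfter l v)
    (hmin : ∀ u : Fin l.length, IsBlack l u → u < v →
      min (whitesBefore l u) (whitesAfter l u) = whitesAfter l v →
      whitesAfter l u ≤ whitesBefore l u → False)
    (hba : whitesAfter l v ≤ whitesBefore l v) :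
    ∃ Bk : Finset (Fin l.length),
      (∀ p ∈ Bk, p < v ∧ IsWhite l p ∧ blackBetween l p v = 0) ∧
      whitesBefore l v ≤ whitesAfter l v + Bk.card ∧ Bk.card ≤ whitesBefore l v := by
  classical
  set Bk := Finset.univ.filter
    (fun p : Fin l.length => p < v ∧ IsWhite l p ∧ blackBetween l p v = 0) with hBkdef
  refine ⟨Bk, fun p hp => (mem_filter.mp hp).2, ?_, ?_⟩
  swap
  · rw [whitesBefore]
    apply card_le_card
    intro p hp
    simp only [hBkdef, mem_filter, mem_univ, true_and] at hp ⊢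
    exact ⟨hp.1, hp.2.1⟩
  · by_cases hT : ∃ u, IsBlack l u ∧ u < v
    · set T := univ.filter (fun u : Fin l.length => IsBlack l u ∧ u < v) with hTdef
      have hTne : T.Nonempty := ⟨hT.choose, by
        simp only [hTdef, mem_filter, mem_univ, true_and]; exact hT.choose_spec⟩
      obtain ⟨u, huT, humax⟩ := T.exists_max_image (fun x => (x : ℕ)) hTne
      simp only [hTdef, mem_filter, mem_univ, true_and] at huT
      obtain ⟨hu, huv⟩ := huT
      have hBeq : Bk = univ.filter
          (fun p : Fin l.length => u < p ∧ p < v ∧ IsWhite l p) := by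
        ext p
        simp only [hBkdef, mem_filter, mem_univ, true_and]
        constructor
        · rintro ⟨hpv, hw, hbb⟩
          refine ⟨?_, hpv, hw⟩
          rcases lt_trichotomy p u with h | h | h
          · exact absurd ((one_le_blackBetween_iff p v).mpr ⟨u, h, huv, hu⟩) (by omega)
          · exact absurd hw (h ▸ not_white_of_black hu)
          · exact h
        · rintro ⟨hup, hpv, hw⟩
          refine ⟨hpv, hw, ?_⟩
          by_contra hbb
          obtain ⟨q, hpq, hqv, hq⟩ := (one_le_blackBetween_iff p v).mp (by omega)
          have h1 : (q : ℕ) ≤ (u : ℕ) := humax q (by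
            simp only [hTdef, mem_filter, mem_univ, true_and]; exact ⟨hq, hqv⟩)
          have h2 : u < q := hup.trans hpq
          rw [Fin.lt_def] at h2
          omega
      have hwcard : Bk.card = whiteBetween l u v := by rw [hBeq]; rfl
      have h1 := before_split hu huv
      have h2 := after_split hv huv
      have h3 := hmax u hu
      by_contra hcon
      push_neg at hcon
      rcases Nat.eq_zero_or_pos Bk.card with hw0 | hw1
      · have e1 : whitesBefore l u = whitesBefore l v := by omega
        have e2 : whitesAfter l u = whitesAfter l v := by omega
        exact hmin u hu huv (by rw [e1, e2]; exact min_eq_right hba) (by omega)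
      · have : whitesAfter l v < min (whitesBefore l u) (whitesAfter l u) :=
          lt_min (by omega) (by omega)
        omega
    · push_neg at hT
      have hBeq : Bk = univ.filter (fun p : Fin l.length => p < v ∧ IsWhite l p) := by
        ext p
        simp only [hBkdef, mem_filter, mem_univ, true_and]
        constructor
        · rintro ⟨h1, h2, _⟩; exact ⟨h1, h2⟩
        · rintro ⟨h1, h2⟩
          refine ⟨h1, h2, ?_⟩
          by_contra hbb
          obtain ⟨q, _, hqv, hq⟩ := (one_le_blackBetween_iff p v).mp (by omega)
          exact absurd hqv (not_lt.mpr (hT q hq))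
      have : Bk.card = whitesBefore l v := by rw [hBeq]; rfl
      omega

/-- Mirror image of `left_block`. -/
lemma right_block {l : List Bool} {v : Fin l.length} (hv : IsBlack l v)
    (hmax : ∀ u : Fin l.length, IsBlack l u →
      min (whitesBefore l u) (whitesAfter l u) ≤ whitesBefore l v)
    (hmin : ∀ u : Fin l.length, IsBlack l u → v < u →
      min (whitesBefore l u) (whitesAfter l u) = whitesBefore l v → False)
    (hba : whitesBefore l v ≤ whitesAfter l v) :
    ∃ Bk : Finset (Fin l.length),
      (∀ p ∈ Bk, v < p ∧ IsWhite l p ∧ blackBetween l v p = 0) ∧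
      whitesAfter l v ≤ whitesBefore l v + Bk.card ∧ Bk.card ≤ whitesAfter l v := by
  classical
  set Bk := Finset.univ.filter
    (fun p : Fin l.length => v < p ∧ IsWhite l p ∧ blackBetween l v p = 0) with hBkdef
  refine ⟨Bk, fun p hp => (mem_filter.mp hp).2, ?_, ?_⟩
  swap
  · rw [whitesAfter]
    apply card_le_card
    intro p hp
    simp only [hBkdef, mem_filter, mem_univ, true_and] at hp ⊢
    exact ⟨hp.1, hp.2.1⟩
  · by_cases hT : ∃ u, IsBlack l u ∧ v < u
    · set T := univ.filter (fun u : Fin l.length => IsBlack l u ∧ v < u) with hTdef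
      have hTne : T.Nonempty := ⟨hT.choose, by
        simp only [hTdef, mem_filter, mem_univ, true_and]; exact hT.choose_spec⟩
      obtain ⟨u, huT, humin⟩ := T.exists_min_image (fun x => (x : ℕ)) hTne
      simp only [hTdef, mem_filter, mem_univ, true_and] at huT
      obtain ⟨hu, hvu⟩ := huT
      have hBeq : Bk = univ.filter
          (fun p : Fin l.length => v < p ∧ p < u ∧ IsWhite l p) := by
        ext p
        simp only [hBkdef, mem_filter, mem_univ, true_and]
        constructor
        · rintro ⟨hvp, hw, hbb⟩
          refine ⟨hvp, ?_, hw⟩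
          rcases lt_trichotomy p u with h | h | h
          · exact h
          · exact absurd hw (h ▸ not_white_of_black hu)
          · exact absurd ((one_le_blackBetween_iff v p).mpr ⟨u, hvu, h, hu⟩) (by omega)
        · rintro ⟨hvp, hpu, hw⟩
          refine ⟨hvp, hw, ?_⟩
          by_contra hbb
          obtain ⟨q, hvq, hqp, hq⟩ := (one_le_blackBetween_iff v p).mp (by omega)
          have h1 : (u : ℕ) ≤ (q : ℕ) := humin q (by
            simp only [hTdef, mem_filter, mem_univ, true_and]; exact ⟨hq, hvq⟩)
          have h2 : q < u := hqp.trans hpu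
          rw [Fin.lt_def] at h2
          omega
      have hwcard : Bk.card = whiteBetween l v u := by
        rw [hBeq]; rfl
      have h1 := before_split hv hvu
      have h2 := after_split hu hvu
      have h3 := hmax u hu
      by_contra hcon
      push_neg at hcon
      rcases Nat.eq_zero_or_pos Bk.card with hw0 | hw1
      · have e1 : whitesBefore l u = whitesBefore l v := by omega
        have e2 : whitesAfter l u = whitesAfter l v := by omega
        exact hmin u hu hvu (by rw [e1, e2]; exact min_eq_left hba)
      · have : whitesBefore l v < min (whitesBefore l u) (whitesAfter l u) :=
          lt_min (by omega) (by omega)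
        omega
    · push_neg at hT
      have hBeq : Bk = univ.filter (fun p : Fin l.length => v < p ∧ IsWhite l p) := by
        ext p
        simp only [hBkdef, mem_filter, mem_univ, true_and]
        constructor
        · rintro ⟨h1, h2, _⟩; exact ⟨h1, h2⟩
        · rintro ⟨h1, h2⟩
          refine ⟨h1, h2, ?_⟩
          by_contra hbb
          obtain ⟨q, hvq, _, hq⟩ := (one_le_blackBetween_iff v p).mp (by omega)
          exact absurd hvq (not_lt.mpr (hT q hq))
      have : Bk.card = whitesAfter l v := by rw [hBeq]; rfl
      omega

/-- Lemma 6.2(e): if a string of beads `l` has at least one black bead, then there is a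
black bead `v` dividing `l` into two parts with `m₁ ≥ m₂` white beads respectively, such
that `m₁·m₂ ≤ μ₁^c(l) ≤ (2·m₁ − 1)·m₂`. -/
theorem exists_balanced_black_bead (l : List Bool)
    (hne : ∃ p : Fin l.length, IsBlack l p)
    (μ₁ : ℕ) (hμ : μ₁ = (P l 1).card) :
    ∃ v : Fin l.length, IsBlack l v ∧
      ∃ m₁ m₂ : ℕ,
        ((m₁ = whitesBefore l v ∧ m₂ = whitesAfter l v) ∨
         (m₁ = whitesAfter l v ∧ m₂ = whitesBefore l v)) ∧
        m₂ ≤ m₁ ∧ m₁ * m₂ ≤ μ₁ ∧ μ₁ ≤ (2 * m₁ - 1) * m₂ := by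
  classical
  subst hμ
  set f : Fin l.length → ℕ := fun u => min (whitesBefore l u) (whitesAfter l u) with hf
  set Bl := univ.filter (IsBlack l) with hBl
  have hBlne : Bl.Nonempty := ⟨hne.choose, by
    simp only [hBl, mem_filter, mem_univ, true_and]; exact hne.choose_spec⟩
  obtain ⟨v0, hv0B, hv0max⟩ := Bl.exists_max_image f hBlne
  have hv0black : IsBlack l v0 := (mem_filter.mp hv0B).2
  have hmaxall : ∀ u : Fin l.length, IsBlack l u → f u ≤ f v0 := fun u hu =>
    hv0max u (by simp only [hBl, mem_filter, mem_univ, true_and]; exact hu)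
  by_cases hM0 : f v0 = 0
  · -- degenerate case : μ₁ = 0
    have hP0 : (P l 1).card = 0 := by
      rw [Finset.card_eq_zero]
      rw [Finset.eq_empty_iff_forall_notMem]
      rintro ⟨i, j⟩ hq
      simp only [P, mem_filter, mem_univ, true_and] at hq
      obtain ⟨hij, hwi, hwj, hbb⟩ := hq
      obtain ⟨u, hiu, huj, hu⟩ := (one_le_blackBetween_iff i j).mp hbb
      have hb1 : 1 ≤ whitesBefore l u := by
        rw [whitesBefore, Nat.one_le_iff_ne_zero, Ne, card_eq_zero,
          Finset.eq_empty_iff_forall_notMem]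
        intro h
        exact h i (by simp only [mem_filter, mem_univ, true_and]; exact ⟨hiu, hwi⟩)
      have ha1 : 1 ≤ whitesAfter l u := by
        rw [whitesAfter, Nat.one_le_iff_ne_zero, Ne, card_eq_zero,
          Finset.eq_empty_iff_forall_notMem]
        intro h
        exact h j (by simp only [mem_filter, mem_univ, true_and]; exact ⟨huj, hwj⟩)
      have := hmaxall u hu
      simp only [hf] at this hM0
      omega
    refine ⟨v0, hv0black, ?_⟩
    rcases le_total (whitesAfter l v0) (whitesBefore l v0) with hle | hle
    · have hb0 : whitesAfter l v0 = 0 := by simp only [hf] at hM0; omega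
      exact ⟨whitesBefore l v0, whitesAfter l v0, Or.inl ⟨rfl, rfl⟩, hle,
        by simp [hb0, hP0]⟩
    · have hb0 : whitesBefore l v0 = 0 := by simp only [hf] at hM0; omega
      exact ⟨whitesAfter l v0, whitesBefore l v0, Or.inr ⟨rfl, rfl⟩, hle,
        by simp [hb0, hP0]⟩
  · have hM1 : 1 ≤ f v0 := Nat.one_le_iff_ne_zero.mpr hM0
    by_cases hA : ∃ u : Fin l.length, IsBlack l u ∧ f u = f v0 ∧
        whitesAfter l u ≤ whitesBefore l u
    · -- Case A : some maximizer has more whites before; take the leftmost such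
      set S := univ.filter (fun u : Fin l.length =>
        IsBlack l u ∧ f u = f v0 ∧ whitesAfter l u ≤ whitesBefore l u) with hSdef
      have hSne : S.Nonempty := ⟨hA.choose, by
        simp only [hSdef, mem_filter, mem_univ, true_and]; exact hA.choose_spec⟩
      obtain ⟨v, hvS, hvmin⟩ := S.exists_min_image (fun x => (x : ℕ)) hSne
      simp only [hSdef, mem_filter, mem_univ, true_and] at hvS
      obtain ⟨hvb, hvf, hba⟩ := hvS
      have hfv : f v = whitesAfter l v := min_eq_right hba
      obtain ⟨Bk, hBk, hw1, hw2⟩ := left_block hvb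
        (fun u hu => le_of_le_of_eq (hmaxall u hu) (hvf.symm.trans hfv))
        (fun u hu huv hmineq hord => by
          have hfu : f u = f v0 := hmineq.trans (hfv.symm.trans hvf)
          have : (v : ℕ) ≤ (u : ℕ) := hvmin u (by
            simp only [hSdef, mem_filter, mem_univ, true_and]
            exact ⟨hu, hfu, hord⟩)
          rw [Fin.lt_def] at huv
          omega)
        hba
      have hcount := P_pairs_bound l Bk (fun p hp => (hBk p hp).2.1)
        (fun q1 h1 q2 h2 h12 => by
          by_contra hbb
          obtain ⟨r, hr1, hr2, hr⟩ := (one_le_blackBetween_iff q1 q2).mp (by omega)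
          have := ((hBk q1 h1).2.2)
          exact absurd ((one_le_blackBetween_iff q1 v).mpr
            ⟨r, hr1, hr2.trans (hBk q2 h2).1, hr⟩) (by omega))
      have hn := before_add_after hvb
      have hb1 : 1 ≤ whitesAfter l v := by
        simp only [hf] at hvf hM1; omega
      refine ⟨v, hvb, whitesBefore l v, whitesAfter l v, Or.inl ⟨rfl, rfl⟩, hba,
        prod_le_card_P hvb, ?_⟩
      exact arith_key _ _ _ _ (by rw [hn]; exact hcount) hw1 hw2 hb1 hba
    · -- Case B : every maximizer has strictly more whites after; take the rightmost one
      push_neg at hA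
      set S := univ.filter (fun u : Fin l.length => IsBlack l u ∧ f u = f v0) with hSdef
      have hSne : S.Nonempty := ⟨v0, by
        simp [hSdef, hv0black]⟩
      obtain ⟨v, hvS, hvmax⟩ := S.exists_max_image (fun x => (x : ℕ)) hSne
      simp only [hSdef, mem_filter, mem_univ, true_and] at hvS
      obtain ⟨hvb, hvf⟩ := hvS
      have hba' := hA v hvb hvf
      have hba : whitesBefore l v ≤ whitesAfter l v := le_of_lt hba'
      have hfv : f v = whitesBefore l v := min_eq_left hba
      obtain ⟨Bk, hBk, hw1, hw2⟩ := right_block hvb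
        (fun u hu => le_of_le_of_eq (hmaxall u hu) (hvf.symm.trans hfv))
        (fun u hu huv hmineq => by
          have hfu : f u = f v0 := hmineq.trans (hfv.symm.trans hvf)
          have : (u : ℕ) ≤ (v : ℕ) := hvmax u (by
            simp only [hSdef, mem_filter, mem_univ, true_and]
            exact ⟨hu, hfu⟩)
          rw [Fin.lt_def] at huv
          omega)
        hba
      have hcount := P_pairs_bound l Bk (fun p hp => (hBk p hp).2.1)
        (fun q1 h1 q2 h2 h12 => by
          by_contra hbb
          obtain ⟨r, hr1, hr2, hr⟩ := (one_le_blackBetween_iff q1 q2).mp (by omega)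
          have := ((hBk q2 h2).2.2)
          exact absurd ((one_le_blackBetween_iff v q2).mpr
            ⟨r, (hBk q1 h1).1.trans hr1, hr2, hr⟩) (by omega))
      have hn := before_add_after hvb
      have hb1 : 1 ≤ whitesBefore l v := by
        simp only [hf] at hvf hM1; omega
      refine ⟨v, hvb, whitesAfter l v, whitesBefore l v, Or.inr ⟨rfl, rfl⟩, hba,
        by rw [mul_comm]; exact prod_le_card_P hvb, ?_⟩
      refine arith_key _ _ _ _ ?_ hw1 hw2 hb1 hba
      rw [Nat.add_comm (whitesAfter l v) (whitesBefore l v), hn]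
      exact hcount

end BeadString
end
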